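/- arXiv:2505.20787 — 4 statements merged into one kernel-verified Lean document; each statement's English description precedes it below -/
import Mathlib

section
/- Let H and K be real Hilbert spaces, T : H → K a bounded (continuous) linear operator, (b_i)_{i∈ι} a Hilbert basis (complete orthonormal family) of H, e ∈ H, and let α > 0 and C > 0 be real numbers. Let μ : ι → ℝ satisfy 0 < μ_i < 1 for every i. Assume that (1) the family (⟨e, b_i⟩²/μ_i)_{i∈ι} is summable with ∑_i ⟨e, b_i⟩²/μ_i ≤ C, and (2) ∑_i μ_i^α · ⟨e, b_i⟩² ≤ ‖T e‖². Then ‖e‖^{2(1+α)} ≤ C^α · ‖T e‖², equivalently ‖e‖² ≤ C^{α/(1+α)} · ‖T e‖^{2/(1+α)}. -/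
open scoped RealInnerProductSpace

/-- **Theorem 8 (source error bounded by a power of the projected error, under the α-error
condition).** If `e ∈ H`, `(b i)` is a Hilbert basis of `H`, `0 < μ i < 1`,
`∑ ⟨e, b i⟩²/μ i ≤ C` and `∑ μ i ^ α ⟨e, b i⟩² ≤ ‖T e‖²`, then
`‖e‖^{2(1+α)} ≤ C^α ‖T e‖²`, equivalently `‖e‖² ≤ C^{α/(1+α)} ‖T e‖^{2/(1+α)}`. -/
theorem stmt3
    {ι H K : Type*}
    [NormedAddCommGroup H] [InnerProductSpace ℝ H] [CompleteSpace H]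
    [NormedAddCommGroup K] [InnerProductSpace ℝ K] [CompleteSpace K]
    (T : H →L[ℝ] K) (b : HilbertBasis ι ℝ H) (e : H)
    (α C : ℝ) (hα : 0 < α) (hC : 0 < C)
    (μ : ι → ℝ) (hμ0 : ∀ i, 0 < μ i) (hμ1 : ∀ i, μ i < 1)
    (hsummable : Summable fun i => ⟪e, b i⟫ ^ 2 / μ i)
    (hsmooth : ∑' i, ⟪e, b i⟫ ^ 2 / μ i ≤ C)
    (hproj : ∑' i, μ i ^ α * ⟪e, b i⟫ ^ 2 ≤ ‖T e‖ ^ 2) :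
    ‖e‖ ^ (2 * (1 + α)) ≤ C ^ α * ‖T e‖ ^ 2 ∧
    ‖e‖ ^ 2 ≤ C ^ (α / (1 + α)) * ‖T e‖ ^ (2 / (1 + α)) := by
  set a : ι → ℝ := fun i => ⟪e, b i⟫ ^ 2 with ha
  have ha_nonneg : ∀ i, 0 ≤ a i := fun i => sq_nonneg _
  have h1α : (0:ℝ) < 1 + α := by linarith
  -- the sum of a equals ‖e‖²
  have hsum_a : HasSum a (‖e‖ ^ 2) := by
    have h2 := b.hasSum_inner_mul_inner e e
    rw [real_inner_self_eq_norm_sq] at h2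
    have heq : (fun i => ⟪e, b i⟫ * ⟪b i, e⟫) = a := by
      funext i
      show ⟪e, b i⟫ * ⟪b i, e⟫ = ⟪e, b i⟫ ^ 2
      rw [real_inner_comm (b i) e, sq]
    rwa [heq] at h2
  have htsum_a : ∑' i, a i = ‖e‖ ^ 2 := hsum_a.tsum_eq
  -- conjugate exponents
  set p : ℝ := (1 + α) / α with hp
  set q : ℝ := 1 + α with hq
  have hpq : p.HolderConjugate q := by
    rw [Real.holderConjugate_iff]
    constructor
    · rw [hp, lt_div_iff₀ hα]; linarith
    · rw [hp, hq]; field_simp; ring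
  have hp_pos : 0 < p := hpq.pos
  have hq_pos : 0 < q := hpq.symm.pos
  have h1pq : 1 / p = α / q := by rw [hp, hq, one_div_div]
  have hsum1 : 1 / p + 1 / q = 1 := by
    rw [one_div, one_div]; exact hpq.inv_add_inv_eq_one
  -- the two Hölder factors
  set f : ι → ℝ := fun i => (a i / μ i) ^ (1 / p) with hf
  set g : ι → ℝ := fun i => (μ i ^ α * a i) ^ (1 / q) with hg
  have hf_nonneg : ∀ i, 0 ≤ f i := fun i =>
    Real.rpow_nonneg (div_nonneg (ha_nonneg i) (hμ0 i).le) _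
  have hg_nonneg : ∀ i, 0 ≤ g i := fun i =>
    Real.rpow_nonneg (mul_nonneg (Real.rpow_nonneg (hμ0 i).le _) (ha_nonneg i)) _
  have hfp : ∀ i, f i ^ p = a i / μ i := fun i => by
    rw [hf]
    dsimp only
    rw [← Real.rpow_mul (div_nonneg (ha_nonneg i) (hμ0 i).le), one_div,
      inv_mul_cancel₀ hp_pos.ne', Real.rpow_one]
  have hgq : ∀ i, g i ^ q = μ i ^ α * a i := fun i => by
    rw [hg]
    dsimp only
    rw [← Real.rpow_mul (mul_nonneg (Real.rpow_nonneg (hμ0 i).le _) (ha_nonneg i)), one_div,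
      inv_mul_cancel₀ hq_pos.ne', Real.rpow_one]
  have hfg : ∀ i, f i * g i = a i := fun i => by
    rw [hf, hg]
    dsimp only
    rw [Real.div_rpow (ha_nonneg i) (hμ0 i).le,
      Real.mul_rpow (Real.rpow_nonneg (hμ0 i).le _) (ha_nonneg i),
      ← Real.rpow_mul (hμ0 i).le, mul_one_div, ← h1pq]
    have hμne : μ i ^ (1 / p) ≠ 0 := (Real.rpow_pos_of_pos (hμ0 i) _).ne'
    have : a i ^ (1 / p) / μ i ^ (1 / p) * (μ i ^ (1 / p) * a i ^ (1 / q))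
        = a i ^ (1 / p) * a i ^ (1 / q) := by
      field_simp
    rw [this, ← Real.rpow_add' (ha_nonneg i) (by rw [hsum1]; norm_num), hsum1, Real.rpow_one]
  -- summability of the Hölder factors
  have hfsum : Summable fun i => f i ^ p := by
    simp only [hfp]; exact hsummable
  have hgsum : Summable fun i => g i ^ q := by
    simp only [hgq]
    refine Summable.of_nonneg_of_le
      (fun i => mul_nonneg (Real.rpow_nonneg (hμ0 i).le _) (ha_nonneg i))
      (fun i => mul_le_of_le_one_left (ha_nonneg i)
        (Real.rpow_le_one (hμ0 i).le (hμ1 i).le hα.le)) hsum_a.summable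
  -- Hölder inequality
  have hHolder :=
    Real.inner_le_Lp_mul_Lq_tsum_of_nonneg hpq hf_nonneg hg_nonneg hfsum hgsum
  simp only [hfg, hfp, hgq] at hHolder
  rw [htsum_a] at hHolder
  -- bound the two factors
  have hT2 : (0:ℝ) ≤ ∑' i, μ i ^ α * a i :=
    tsum_nonneg fun i => mul_nonneg (Real.rpow_nonneg (hμ0 i).le _) (ha_nonneg i)
  have hfac1 : (∑' i, a i / μ i) ^ (1 / p) ≤ C ^ (1 / p) :=
    Real.rpow_le_rpow (tsum_nonneg fun i => div_nonneg (ha_nonneg i) (hμ0 i).le) hsmooth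
      (by positivity)
  have hfac2 : (∑' i, μ i ^ α * a i) ^ (1 / q) ≤ (‖T e‖ ^ 2) ^ (1 / q) :=
    Real.rpow_le_rpow hT2 hproj (by positivity)
  have key : ‖e‖ ^ 2 ≤ C ^ (1 / p) * (‖T e‖ ^ 2) ^ (1 / q) :=
    hHolder.trans (mul_le_mul hfac1 hfac2 (Real.rpow_nonneg hT2 _) (by positivity))
  -- second conjunct
  have key2 : ‖e‖ ^ 2 ≤ C ^ (α / q) * ‖T e‖ ^ (2 / q) := by
    have h2q : (‖T e‖ ^ 2 : ℝ) ^ (1 / q) = ‖T e‖ ^ (2 / q) := by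
      rw [← Real.rpow_natCast ‖T e‖ 2, ← Real.rpow_mul (norm_nonneg _), mul_one_div]
      norm_num
    rw [← h2q, ← h1pq]
    exact key
  refine ⟨?_, key2⟩
  -- first conjunct: raise to the power 1 + α
  have hraise := Real.rpow_le_rpow (by positivity) key2 h1α.le
  show ‖e‖ ^ (2 * q) ≤ C ^ α * ‖T e‖ ^ 2
  have hL : (‖e‖ ^ 2 : ℝ) ^ q = ‖e‖ ^ (2 * q) := by
    rw [← Real.rpow_natCast ‖e‖ 2, ← Real.rpow_mul (norm_nonneg e)]
    norm_num
  have hR : (C ^ (α / q) * ‖T e‖ ^ (2 / q) : ℝ) ^ q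
      = C ^ α * ‖T e‖ ^ 2 := by
    rw [Real.mul_rpow (Real.rpow_nonneg hC.le _) (Real.rpow_nonneg (norm_nonneg _) _),
      ← Real.rpow_mul hC.le, ← Real.rpow_mul (norm_nonneg _),
      div_mul_cancel₀ _ h1α.ne', div_mul_cancel₀ _ h1α.ne']
    norm_num
  rw [hL, hR] at hraise
  exact hraise
end

section
/- Let (Ω, F, μ) be a probability space, m ⊆ F a sub-σ-algebra, and let u, u₀, g₀ be measurable real-valued functions on Ω with |u| ≤ M, |u₀| ≤ M and |g₀| ≤ M almost everywhere for a constant M > 0, and with μ[u₀|m] = μ[g₀|m] almost everywhere. Write A = μ[u|m] and r₀ = μ[g₀|m], and define ℓ(w) = (μ[w|m] − g₀)² + 2(μ[w|m] − r₀)(w − μ[w|m]) pointwise. Then (1) almost everywhere, ℓ(u) − ℓ(u₀) = (A − r₀)·(2u − A + r₀ − 2g₀), and (2) ∫ (ℓ(u) − ℓ(u₀))² dμ ≤ 36·M²·∫ (A − r₀)² dμ. -/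
open MeasureTheory

/-- **Pointwise factorization and variance bound for the debiased loss (from the proof of
Theorem 7).**  With `A = μ[u|m]`, `r₀ = μ[g₀|m]`, the debiased loss
`ℓ(w) = (μ[w|m] − g₀)² + 2(μ[w|m] − r₀)(w − μ[w|m])` satisfies, when `|u|, |u₀|, |g₀| ≤ M`
a.e. and `μ[u₀|m] = μ[g₀|m]` a.e.:
(1) a.e., `ℓ(u) − ℓ(u₀) = (A − r₀)(2u − A + r₀ − 2g₀)`; and
(2) `∫ (ℓ(u) − ℓ(u₀))² dμ ≤ 36 M² ∫ (A − r₀)² dμ`. -/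
theorem stmt9
    {Ω : Type*} (m : MeasurableSpace Ω) {F : MeasurableSpace Ω} (hm : m ≤ F)
    (μ : Measure Ω) [IsProbabilityMeasure μ]
    (u u₀ g₀ : Ω → ℝ) (M : ℝ) (hM : 0 < M)
    (hu_meas : Measurable u) (hu₀_meas : Measurable u₀) (hg₀_meas : Measurable g₀)
    (hu_bdd : ∀ᵐ ω ∂μ, |u ω| ≤ M)
    (hu₀_bdd : ∀ᵐ ω ∂μ, |u₀ ω| ≤ M)
    (hg₀_bdd : ∀ᵐ ω ∂μ, |g₀ ω| ≤ M)
    (hcmr : μ[u₀|m] =ᵐ[μ] μ[g₀|m])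
    (ℓ : (Ω → ℝ) → Ω → ℝ)
    (hℓ : ∀ w : Ω → ℝ, ℓ w = fun ω =>
      ((μ[w|m]) ω - g₀ ω) ^ 2 + 2 * ((μ[w|m]) ω - (μ[g₀|m]) ω) * (w ω - (μ[w|m]) ω)) :
    (∀ᵐ ω ∂μ, ℓ u ω - ℓ u₀ ω
        = ((μ[u|m]) ω - (μ[g₀|m]) ω)
            * (2 * u ω - (μ[u|m]) ω + (μ[g₀|m]) ω - 2 * g₀ ω)) ∧
    (∫ ω, (ℓ u ω - ℓ u₀ ω) ^ 2 ∂μ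
        ≤ 36 * M ^ 2 * ∫ ω, ((μ[u|m]) ω - (μ[g₀|m]) ω) ^ 2 ∂μ) := by
  have hMc : (M.toNNReal : ℝ) = M := Real.coe_toNNReal M hM.le
  have hA_bdd : ∀ᵐ ω ∂μ, |(μ[u|m]) ω| ≤ M := by
    have := ae_bdd_condExp_of_ae_bdd (m := m) (μ := μ) (R := M.toNNReal) (f := u)
      (by filter_upwards [hu_bdd] with ω h using by rwa [hMc])
    filter_upwards [this] with ω h using by rwa [hMc] at h
  have hr_bdd : ∀ᵐ ω ∂μ, |(μ[g₀|m]) ω| ≤ M := by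
    have := ae_bdd_condExp_of_ae_bdd (m := m) (μ := μ) (R := M.toNNReal) (f := g₀)
      (by filter_upwards [hg₀_bdd] with ω h using by rwa [hMc])
    filter_upwards [this] with ω h using by rwa [hMc] at h
  have h1 : ∀ᵐ ω ∂μ, ℓ u ω - ℓ u₀ ω
      = ((μ[u|m]) ω - (μ[g₀|m]) ω)
          * (2 * u ω - (μ[u|m]) ω + (μ[g₀|m]) ω - 2 * g₀ ω) := by
    filter_upwards [hcmr] with ω hω
    rw [hℓ u, hℓ u₀]
    simp only [hω]
    ring
  refine ⟨h1, ?_⟩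
  have hmeasA : AEStronglyMeasurable (fun ω => ((μ[u|m]) ω - (μ[g₀|m]) ω) ^ 2) μ := by
    apply AEStronglyMeasurable.pow
    have hu' : AEStronglyMeasurable (μ[u|m]) μ :=
      ((stronglyMeasurable_condExp (f := u) (μ := μ)).mono hm).aestronglyMeasurable
    have hg' : AEStronglyMeasurable (μ[g₀|m]) μ :=
      ((stronglyMeasurable_condExp (f := g₀) (μ := μ)).mono hm).aestronglyMeasurable
    exact hu'.sub hg' 
  have hint : Integrable (fun ω => 36 * M ^ 2 * ((μ[u|m]) ω - (μ[g₀|m]) ω) ^ 2) μ := by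
    apply Integrable.mono' (integrable_const (36 * M ^ 2 * (2 * M) ^ 2)) (hmeasA.const_mul _)
    filter_upwards [hA_bdd, hr_bdd] with ω hA hr
    have h2 : |(μ[u|m]) ω - (μ[g₀|m]) ω| ≤ 2 * M := by
      calc |(μ[u|m]) ω - (μ[g₀|m]) ω| ≤ |(μ[u|m]) ω| + |(μ[g₀|m]) ω| := abs_sub _ _
        _ ≤ 2 * M := by linarith
    have h3 : ((μ[u|m]) ω - (μ[g₀|m]) ω) ^ 2 ≤ (2 * M) ^ 2 := by
      rw [← sq_abs]; exact pow_le_pow_left₀ (abs_nonneg _) h2 2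
    rw [Real.norm_eq_abs, abs_of_nonneg (by positivity)]
    have : (0:ℝ) ≤ 36 * M ^ 2 := by positivity
    nlinarith
  have hle : ∀ᵐ ω ∂μ, (ℓ u ω - ℓ u₀ ω) ^ 2
      ≤ 36 * M ^ 2 * ((μ[u|m]) ω - (μ[g₀|m]) ω) ^ 2 := by
    filter_upwards [h1, hA_bdd, hr_bdd, hu_bdd, hg₀_bdd] with ω he hA hr hu hg
    rw [he, mul_pow]
    have hb : |2 * u ω - (μ[u|m]) ω + (μ[g₀|m]) ω - 2 * g₀ ω| ≤ 6 * M := by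
      have := abs_sub_abs_le_abs_sub (2 * u ω) (g₀ ω)
      calc |2 * u ω - (μ[u|m]) ω + (μ[g₀|m]) ω - 2 * g₀ ω|
          ≤ |2 * u ω| + |(μ[u|m]) ω| + |(μ[g₀|m]) ω| + |2 * g₀ ω| := by
            have a1 := abs_add_le (2 * u ω - (μ[u|m]) ω + (μ[g₀|m]) ω) (-(2 * g₀ ω))
            have a2 := abs_add_le (2 * u ω - (μ[u|m]) ω) ((μ[g₀|m]) ω)
            have a3 := abs_add_le (2 * u ω) (-((μ[u|m]) ω))
            simp only [abs_neg, ← sub_eq_add_neg] at a1 a2 a3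
            linarith
        _ ≤ 6 * M := by
            rw [abs_mul, abs_mul] at *
            simp only [abs_two] at *
            linarith
    have hsq : (2 * u ω - (μ[u|m]) ω + (μ[g₀|m]) ω - 2 * g₀ ω) ^ 2 ≤ (6 * M) ^ 2 := by
      rw [← sq_abs]; exact pow_le_pow_left₀ (abs_nonneg _) hb 2
    have hnn : (0:ℝ) ≤ ((μ[u|m]) ω - (μ[g₀|m]) ω) ^ 2 := sq_nonneg _
    nlinarith
  calc ∫ ω, (ℓ u ω - ℓ u₀ ω) ^ 2 ∂μ
      ≤ ∫ ω, 36 * M ^ 2 * ((μ[u|m]) ω - (μ[g₀|m]) ω) ^ 2 ∂μ :=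
        integral_mono_of_nonneg (ae_of_all _ fun ω => sq_nonneg _) hint hle
    _ = 36 * M ^ 2 * ∫ ω, ((μ[u|m]) ω - (μ[g₀|m]) ω) ^ 2 ∂μ := integral_const_mul _ _
end

section
/- Let ι be a countable index set, a : ι → ℝ with a_i ≥ 0 for all i, σ : ι → ℝ with σ_i > 0 for all i, let β ≥ 0 be real, t ≥ 1 a natural number, B ≥ 0 and λ > 0 real. Assume the family (a_i / σ_i^{β})_{i∈ι} is summable with ∑_i a_i / σ_i^{β} ≤ B². If β ≤ 2t, then the family ((λ/(λ+σ_i))^{2t} a_i)_{i∈ι} is summable and ∑_i (λ/(λ+σ_i))^{2t} · a_i ≤ B² · λ^{β}. If moreover β + 1 ≤ 2t, then also ∑_i σ_i · (λ/(λ+σ_i))^{2t} · a_i ≤ B² · λ^{β+1}. -/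
private lemma key_filter {σi lam β q : ℝ} (hσ : 0 < σi) (hlam : 0 < lam)
    (hβ : 0 ≤ β) (h : β ≤ q) :
    (lam / (lam + σi)) ^ q ≤ lam ^ β / σi ^ β := by
  have hden : 0 < lam + σi := by linarith
  have hx : 0 < lam / (lam + σi) := div_pos hlam hden
  have hx1 : lam / (lam + σi) ≤ 1 := by
    rw [div_le_one hden]; linarith
  calc (lam / (lam + σi)) ^ q ≤ (lam / (lam + σi)) ^ β :=
        Real.rpow_le_rpow_of_exponent_ge hx hx1 h
    _ = lam ^ β / (lam + σi) ^ β := Real.div_rpow hlam.le hden.le β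
    _ ≤ lam ^ β / σi ^ β := by
        apply div_le_div_of_nonneg_left (Real.rpow_nonneg hlam.le β)
          (Real.rpow_pos_of_pos hσ β)
        exact Real.rpow_le_rpow hσ.le (by linarith) hβ

/-- **Lemma 1 (regularization-bias bound) in spectral-sequence form.**
Under the β-source condition `∑ a i / σ i ^ β ≤ B²`, the iterated-Tikhonov filter factors
satisfy `∑ (λ/(λ+σ i))^{2t} a i ≤ B² λ^β` when `β ≤ 2t`, and
`∑ σ i (λ/(λ+σ i))^{2t} a i ≤ B² λ^{β+1}` when `β + 1 ≤ 2t` (real powers). -/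
theorem stmt14
    {ι : Type*} [Countable ι]
    (a σ : ι → ℝ) (ha : ∀ i, 0 ≤ a i) (hσ : ∀ i, 0 < σ i)
    (β : ℝ) (hβ : 0 ≤ β) (t : ℕ) (ht : 1 ≤ t) (B : ℝ) (hB : 0 ≤ B)
    (lam : ℝ) (hlam : 0 < lam)
    (hsummable : Summable fun i => a i / σ i ^ β)
    (hsource : ∑' i, a i / σ i ^ β ≤ B ^ 2) :
    (β ≤ 2 * (t : ℝ) →
      (Summable fun i => (lam / (lam + σ i)) ^ (2 * (t : ℝ)) * a i) ∧
      ∑' i, (lam / (lam + σ i)) ^ (2 * (t : ℝ)) * a i ≤ B ^ 2 * lam ^ β) ∧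
    (β + 1 ≤ 2 * (t : ℝ) →
      (Summable fun i => σ i * (lam / (lam + σ i)) ^ (2 * (t : ℝ)) * a i) ∧
      ∑' i, σ i * (lam / (lam + σ i)) ^ (2 * (t : ℝ)) * a i ≤ B ^ 2 * lam ^ (β + 1)) := by
  have hxnn : ∀ i, (0:ℝ) ≤ (lam / (lam + σ i)) ^ (2 * (t : ℝ)) := fun i =>
    Real.rpow_nonneg (div_nonneg hlam.le (by have := (hσ i); linarith)) _
  constructor
  · intro hβt
    have hle : ∀ i, (lam / (lam + σ i)) ^ (2 * (t : ℝ)) * a i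
        ≤ lam ^ β * (a i / σ i ^ β) := by
      intro i
      have := key_filter (hσ i) hlam hβ hβt
      calc (lam / (lam + σ i)) ^ (2 * (t : ℝ)) * a i
          ≤ (lam ^ β / σ i ^ β) * a i := mul_le_mul_of_nonneg_right this (ha i)
        _ = lam ^ β * (a i / σ i ^ β) := by ring
    have hnn : ∀ i, 0 ≤ (lam / (lam + σ i)) ^ (2 * (t : ℝ)) * a i := fun i =>
      mul_nonneg (hxnn i) (ha i)
    have hs : Summable fun i => (lam / (lam + σ i)) ^ (2 * (t : ℝ)) * a i :=
      Summable.of_nonneg_of_le hnn hle (hsummable.mul_left _)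
    refine ⟨hs, ?_⟩
    calc ∑' i, (lam / (lam + σ i)) ^ (2 * (t : ℝ)) * a i
        ≤ ∑' i, lam ^ β * (a i / σ i ^ β) :=
          Summable.tsum_le_tsum hle hs (hsummable.mul_left _)
      _ = lam ^ β * ∑' i, a i / σ i ^ β := tsum_mul_left
      _ ≤ lam ^ β * B ^ 2 := by
          exact mul_le_mul_of_nonneg_left hsource (Real.rpow_nonneg hlam.le β)
      _ = B ^ 2 * lam ^ β := mul_comm _ _
  · intro hβt
    have hle : ∀ i, σ i * (lam / (lam + σ i)) ^ (2 * (t : ℝ)) * a i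
        ≤ lam ^ (β + 1) * (a i / σ i ^ β) := by
      intro i
      have hk := key_filter (hσ i) hlam (by linarith) hβt
      have h1 : σ i * (lam / (lam + σ i)) ^ (2 * (t : ℝ))
          ≤ σ i * (lam ^ (β + 1) / σ i ^ (β + 1)) :=
        mul_le_mul_of_nonneg_left hk (hσ i).le
      have h2 : σ i * (lam ^ (β + 1) / σ i ^ (β + 1)) = lam ^ (β + 1) / σ i ^ β := by
        have hσ1 : σ i ^ (β + 1) = σ i ^ β * σ i := by
          rw [Real.rpow_add (hσ i), Real.rpow_one]
        rw [hσ1, div_mul_eq_div_div, mul_comm, div_mul_cancel₀ _ (hσ i).ne']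
      calc σ i * (lam / (lam + σ i)) ^ (2 * (t : ℝ)) * a i
          ≤ (lam ^ (β + 1) / σ i ^ β) * a i := by
            rw [← h2]; exact mul_le_mul_of_nonneg_right h1 (ha i)
        _ = lam ^ (β + 1) * (a i / σ i ^ β) := by ring
    have hnn : ∀ i, 0 ≤ σ i * (lam / (lam + σ i)) ^ (2 * (t : ℝ)) * a i := fun i =>
      mul_nonneg (mul_nonneg (hσ i).le (hxnn i)) (ha i)
    have hs : Summable fun i => σ i * (lam / (lam + σ i)) ^ (2 * (t : ℝ)) * a i :=
      Summable.of_nonneg_of_le hnn hle (hsummable.mul_left _)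
    refine ⟨hs, ?_⟩
    calc ∑' i, σ i * (lam / (lam + σ i)) ^ (2 * (t : ℝ)) * a i
        ≤ ∑' i, lam ^ (β + 1) * (a i / σ i ^ β) :=
          Summable.tsum_le_tsum hle hs (hsummable.mul_left _)
      _ = lam ^ (β + 1) * ∑' i, a i / σ i ^ β := tsum_mul_left
      _ ≤ lam ^ (β + 1) * B ^ 2 :=
          mul_le_mul_of_nonneg_left hsource (Real.rpow_nonneg hlam.le _)
      _ = B ^ 2 * lam ^ (β + 1) := mul_comm _ _
end

section
/- Let ι be a countable index set, α ≥ 0 a real number, a : ι → ℝ with a_i ≥ 0 for all i, and μ : ι → ℝ with 0 < μ_i ≤ 1 for all i. Assume the family (a_i/μ_i)_{i∈ι} is summable. Then the families (a_i), (μ_i^{α} a_i) are summable and (∑_i a_i)^{1+α} ≤ (∑_i μ_i^{α} · a_i) · (∑_i a_i/μ_i)^{α}, where powers are real (rpow) powers. -/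
/-- **Jensen-type interpolation inequality (core of the proof of Theorem 8).**
For nonnegative `a i`, weights `0 < μ i ≤ 1`, and `α ≥ 0`, if `(a i / μ i)` is summable then
so are `(a i)` and `(μ i ^ α · a i)`, and
`(∑ a i)^{1+α} ≤ (∑ μ i ^ α a i) · (∑ a i / μ i)^α` (real powers). -/
theorem stmt15
    {ι : Type*} [Countable ι]
    (α : ℝ) (hα : 0 ≤ α)
    (a μ : ι → ℝ) (ha : ∀ i, 0 ≤ a i) (hμ0 : ∀ i, 0 < μ i) (hμ1 : ∀ i, μ i ≤ 1)
    (hsummable : Summable fun i => a i / μ i) :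
    (Summable a) ∧ (Summable fun i => μ i ^ α * a i) ∧
    (∑' i, a i) ^ (1 + α)
      ≤ (∑' i, μ i ^ α * a i) * (∑' i, a i / μ i) ^ α := by
  have hle : ∀ i, a i ≤ a i / μ i := fun i => le_div_self (ha i) (hμ0 i) (hμ1 i)
  have hsa : Summable a := hsummable.of_nonneg_of_le ha hle
  have hμα1 : ∀ i, μ i ^ α ≤ 1 := fun i =>
    Real.rpow_le_one (hμ0 i).le (hμ1 i) hα
  have hμα0 : ∀ i, 0 ≤ μ i ^ α := fun i => Real.rpow_nonneg (hμ0 i).le α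
  have hsμa : Summable fun i => μ i ^ α * a i := by
    refine hsa.of_nonneg_of_le (fun i => mul_nonneg (hμα0 i) (ha i)) fun i => ?_
    calc μ i ^ α * a i ≤ 1 * a i := by
          exact mul_le_mul_of_nonneg_right (hμα1 i) (ha i)
      _ = a i := one_mul _
  refine ⟨hsa, hsμa, ?_⟩
  rcases eq_or_lt_of_le hα with hα0 | hα0
  · simp [← hα0, Real.rpow_one]
  -- now 0 < α
  set p : ℝ := 1 + α with hp
  have hp1 : 1 < p := by simp [hp]; linarith
  have hp0 : (0:ℝ) < p := lt_trans one_pos hp1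
  set q : ℝ := p / (p - 1) with hq
  have hpq : p.HolderConjugate q := Real.HolderConjugate.conjExponent hp1
  have hq0 : (0:ℝ) < q := hpq.symm.pos
  set f : ι → ℝ := fun i => (μ i ^ α * a i) ^ (1 / p) with hf
  set g : ι → ℝ := fun i => (a i / μ i) ^ (1 / q) with hg
  have hf0 : ∀ i, 0 ≤ f i := fun i => Real.rpow_nonneg (mul_nonneg (hμα0 i) (ha i)) _
  have hg0 : ∀ i, 0 ≤ g i := fun i => Real.rpow_nonneg (div_nonneg (ha i) (hμ0 i).le) _
  have hfp : ∀ i, f i ^ p = μ i ^ α * a i := fun i => by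
    simp only [hf]
    rw [← Real.rpow_mul (mul_nonneg (hμα0 i) (ha i)), one_div,
      inv_mul_cancel₀ (ne_of_gt hp0), Real.rpow_one]
  have hgq : ∀ i, g i ^ q = a i / μ i := fun i => by
    simp only [hg]
    rw [← Real.rpow_mul (div_nonneg (ha i) (hμ0 i).le), one_div,
      inv_mul_cancel₀ (ne_of_gt hq0), Real.rpow_one]
  have hfg : ∀ i, f i * g i = a i := fun i => by
    simp only [hf, hg]
    rw [Real.mul_rpow (hμα0 i) (ha i), Real.div_rpow (ha i) (hμ0 i).le,
      ← Real.rpow_mul (hμ0 i).le]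
    have h1q : 1 / q = α * (1 / p) := by
      rw [hq, one_div_div, hp]
      field_simp
      ring
    have hsum : 1 / p + α * (1 / p) = 1 := by
      rw [hp]; field_simp
    rw [h1q]
    have hμpos : (0:ℝ) < μ i ^ (α * (1 / p)) := Real.rpow_pos_of_pos (hμ0 i) _
    calc μ i ^ (α * (1 / p)) * a i ^ (1 / p) * (a i ^ (α * (1 / p)) / μ i ^ (α * (1 / p)))
        = a i ^ (1 / p) * a i ^ (α * (1 / p)) * (μ i ^ (α * (1 / p)) / μ i ^ (α * (1 / p))) := by
          ring
      _ = a i ^ (1 / p + α * (1 / p)) * 1 := by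
          rw [← Real.rpow_add' (ha i) (ne_of_eq_of_ne hsum one_ne_zero), div_self (ne_of_gt hμpos)]
      _ = a i := by rw [hsum, Real.rpow_one, mul_one]
  have hfsum : Summable fun i => f i ^ p := by
    simpa only [hfp] using hsμa
  have hgsum : Summable fun i => g i ^ q := by
    simpa only [hgq] using hsummable
  obtain ⟨-, hH⟩ := Real.summable_and_inner_le_Lp_mul_Lq_tsum_of_nonneg hpq hf0 hg0 hfsum hgsum
  simp only [hfp, hgq, hfg] at hH
  -- raise to the p-th power
  have hA : 0 ≤ ∑' i, μ i ^ α * a i :=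
    tsum_nonneg fun i => mul_nonneg (hμα0 i) (ha i)
  have hB : 0 ≤ ∑' i, a i / μ i := tsum_nonneg fun i => div_nonneg (ha i) (hμ0 i).le
  have h2 := Real.rpow_le_rpow (tsum_nonneg ha) hH hp0.le
  calc (∑' i, a i) ^ p
      ≤ ((∑' i, μ i ^ α * a i) ^ (1 / p) * (∑' i, a i / μ i) ^ (1 / q)) ^ p := h2
    _ = (∑' i, μ i ^ α * a i) * (∑' i, a i / μ i) ^ α := by
        rw [Real.mul_rpow (Real.rpow_nonneg hA _) (Real.rpow_nonneg hB _),
          ← Real.rpow_mul hA, ← Real.rpow_mul hB, one_div,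
          inv_mul_cancel₀ (ne_of_gt hp0), Real.rpow_one]
        congr 1
        rw [hq, one_div_div, div_mul_cancel₀ _ (ne_of_gt hp0)]
        congr 1
        rw [hp]; ring
end
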